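/- Let R be a commutative ring, let M and N be R-modules, and consider the Koszul-signed (super) graded tensor product Λ(M) ⊗' Λ(N) of the exterior algebras of M and N, in which homogeneous elements multiply by the rule (a ⊗' b)·(c ⊗' d) = (−1)^{|b||c|} (a·c) ⊗' (b·d). Let x₁,…,xₙ ∈ M and y₁,…,yₙ ∈ N, and set s := Σᵢ ι(xᵢ) ⊗' ι(yᵢ), where ι denotes the canonical inclusion of the module into its exterior algebra. Then s⁴ = 24 · Σ_{i<j<k<l} (ι(xᵢ)·ι(xⱼ)·ι(x_k)·ι(x_l)) ⊗' (ι(yᵢ)·ι(yⱼ)·ι(y_k)·ι(y_l)). -/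

import Mathlib

/-!
The summands `tᵢ = ι xᵢ ᵍ⊗ₜ ι yᵢ` have bidegree `(1, 1)`: swapping two of them costs one sign
in each factor and the two signs cancel, so they commute pairwise, and they square to zero.
For pairwise commuting square-zero elements, `(∑ tᵢ) ^ m = m! • ∑_{i₁ < ⋯ < iₘ} t_{i₁} ⋯ t_{iₘ}`,
by induction on the index set using `(u + S) ^ (m + 1) = S ^ (m + 1) + (m + 1) • u * S ^ m`.
Finally `tᵢ tⱼ tₖ tₗ = (tᵢ tⱼ)(tₖ tₗ)`, where each pair is `-(ι xᵢ ι xⱼ ᵍ⊗ₜ ι yᵢ ι yⱼ)` and the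
even degree of `ι yᵢ ι yⱼ` lets the second pair pass without a further sign.
-/

open TensorProduct ExteriorAlgebra Finset

section OrderedEsymm

variable {A κ : Type*} [Ring A] [LinearOrder κ]

theorem Commute.add_pow_succ_of_mul_self_eq_zero {u S : A} (hc : Commute u S) (hu : u * u = 0)
    (m : ℕ) : (u + S) ^ (m + 1) = S ^ (m + 1) + (m + 1) • (u * S ^ m) := by
  induction m with
  | zero => simp [add_comm]
  | succ m ih =>
    have huSu : u * S ^ m * u = 0 := by
      rw [mul_assoc, ← (hc.pow_right m).eq, ← mul_assoc, hu, zero_mul]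
    rw [pow_succ, ih, add_mul, mul_add, mul_add, smul_mul_assoc, smul_mul_assoc, huSu, smul_zero,
      zero_add, mul_assoc, ← pow_succ, ← pow_succ, ← (hc.pow_right (m + 1)).eq, succ_nsmul' _ (m + 1)]
    abel

/-- `orderedEsymm t m s = ∑_{i₁ < ⋯ < iₘ in s} t i₁ * ⋯ * t iₘ`. -/
def orderedEsymm (t : κ → A) : ℕ → Finset κ → A
  | 0, _ => 1
  | m + 1, s => ∑ i ∈ s, t i * orderedEsymm t m (s.filter (i < ·))

variable (t : κ → A)

@[simp] theorem orderedEsymm_zero (s : Finset κ) : orderedEsymm t 0 s = 1 := rfl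

@[simp] theorem orderedEsymm_succ_empty (m : ℕ) : orderedEsymm t (m + 1) ∅ = 0 := rfl

theorem orderedEsymm_succ (m : ℕ) (s : Finset κ) :
    orderedEsymm t (m + 1) s = ∑ i ∈ s, t i * orderedEsymm t m (s.filter (i < ·)) := rfl

theorem orderedEsymm_succ_insert_of_lt {a : κ} {s : Finset κ} (has : ∀ i ∈ s, a < i) (m : ℕ) :
    orderedEsymm t (m + 1) (insert a s) = t a * orderedEsymm t m s + orderedEsymm t (m + 1) s := by
  have ha : a ∉ s := fun h ↦ lt_irrefl a (has a h)
  have h_filter_a : (insert a s).filter (a < ·) = s := by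
    rw [filter_insert, if_neg (lt_irrefl a), filter_true_of_mem has]
  have h_filter : ∀ i ∈ s, (insert a s).filter (i < ·) = s.filter (i < ·) := fun i hi ↦ by
    rw [filter_insert, if_neg (has i hi).asymm]
  rw [orderedEsymm_succ, sum_insert ha, h_filter_a, sum_congr rfl fun i hi ↦ by rw [h_filter i hi],
    ← orderedEsymm_succ]

theorem sum_pow_eq_factorial_smul_orderedEsymm (hc : ∀ i j, Commute (t i) (t j))
    (ht : ∀ i, t i * t i = 0) (s : Finset κ) (m : ℕ) :
    (∑ i ∈ s, t i) ^ m = m.factorial • orderedEsymm t m s := by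
  induction s using Finset.induction_on_min generalizing m with
  | empty => cases m <;> simp
  | insert a s has ih =>
    cases m with
    | zero => simp
    | succ m =>
      have hSa : Commute (t a) (∑ i ∈ s, t i) := Commute.sum_right _ _ _ fun i _ ↦ hc a i
      rw [sum_insert fun h ↦ lt_irrefl a (has a h), hSa.add_pow_succ_of_mul_self_eq_zero (ht a),
        ih, ih, orderedEsymm_succ_insert_of_lt t has, mul_smul_comm, smul_smul, smul_add,
        Nat.factorial_succ, add_comm]

theorem orderedEsymm_succ_Ioi [LocallyFiniteOrderTop κ] (m : ℕ) (i : κ) :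
    orderedEsymm t (m + 1) (Ioi i) = ∑ j ∈ Ioi i, t j * orderedEsymm t m (Ioi j) := by
  refine sum_congr rfl fun j hj ↦ ?_
  congr 2
  ext k
  simp only [mem_filter, mem_Ioi] at hj ⊢
  exact ⟨And.right, fun hk ↦ ⟨hj.trans hk, hk⟩⟩

theorem orderedEsymm_succ_univ [Fintype κ] [LocallyFiniteOrderTop κ] (m : ℕ) :
    orderedEsymm t (m + 1) univ = ∑ i, t i * orderedEsymm t m (Ioi i) := by
  simp only [orderedEsymm_succ, filter_lt_eq_Ioi]

end OrderedEsymm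

namespace GradedTensorProduct

variable {R A B : Type*} [CommRing R] [Ring A] [Ring B] [Algebra R A] [Algebra R B]
  {𝒜 : ℕ → Submodule R A} {ℬ : ℕ → Submodule R B} [GradedAlgebra 𝒜] [GradedAlgebra ℬ]

theorem neg_tmul (a : A) (b : B) : ((-a) ᵍ⊗ₜ[R] b : 𝒜 ᵍ⊗[R] ℬ) = -(a ᵍ⊗ₜ[R] b) :=
  congrArg (of R 𝒜 ℬ) (TensorProduct.neg_tmul a b)

theorem tmul_neg (a : A) (b : B) : (a ᵍ⊗ₜ[R] (-b) : 𝒜 ᵍ⊗[R] ℬ) = -(a ᵍ⊗ₜ[R] b) :=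
  congrArg (of R 𝒜 ℬ) (TensorProduct.tmul_neg a b)

theorem zero_tmul (b : B) : ((0 : A) ᵍ⊗ₜ[R] b : 𝒜 ᵍ⊗[R] ℬ) = 0 :=
  congrArg (of R 𝒜 ℬ) (TensorProduct.zero_tmul A b)

theorem tmul_mul_tmul_of_even {i j : ℕ} (a₁ : A) {b₁ : B} (hb₁ : b₁ ∈ ℬ j) (hj : Even j)
    {a₂ : A} (ha₂ : a₂ ∈ 𝒜 i) (b₂ : B) :
    (a₁ ᵍ⊗ₜ[R] b₁ * a₂ ᵍ⊗ₜ[R] b₂ : 𝒜 ᵍ⊗[R] ℬ) = (a₁ * a₂) ᵍ⊗ₜ[R] (b₁ * b₂) := by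
  rw [tmul_coe_mul_coe_tmul 𝒜 ℬ a₁ ⟨b₁, hb₁⟩ ⟨a₂, ha₂⟩ b₂, (hj.mul_right i).neg_one_pow, one_smul]

theorem tmul_mul_tmul_of_odd {i j : ℕ} (a₁ : A) {b₁ : B} (hb₁ : b₁ ∈ ℬ j) (hj : Odd j)
    {a₂ : A} (ha₂ : a₂ ∈ 𝒜 i) (hi : Odd i) (b₂ : B) :
    (a₁ ᵍ⊗ₜ[R] b₁ * a₂ ᵍ⊗ₜ[R] b₂ : 𝒜 ᵍ⊗[R] ℬ) = -((a₁ * a₂) ᵍ⊗ₜ[R] (b₁ * b₂)) := by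
  rw [tmul_coe_mul_coe_tmul 𝒜 ℬ a₁ ⟨b₁, hb₁⟩ ⟨a₂, ha₂⟩ b₂, (hj.mul hi).neg_one_pow,
    Units.neg_smul, one_smul]

end GradedTensorProduct

namespace ExteriorAlgebra

open GradedTensorProduct

variable {R M N : Type*} [CommRing R] [AddCommGroup M] [Module R M] [AddCommGroup N] [Module R N]

theorem ι_mem_exteriorPower_one (m : M) : ι R m ∈ ⋀[R]^1 M := by
  rw [exteriorPower, pow_one]
  exact LinearMap.mem_range_self _ m

theorem ι_mul_ι_comm (m m' : M) : ι R m' * ι R m = -(ι R m * ι R m') :=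
  eq_neg_of_add_eq_zero_right (ι_add_mul_swap m m')

local notation "Λ(M)ᵍ⊗Λ(N)" => (fun i : ℕ ↦ ⋀[R]^i M) ᵍ⊗[R] (fun i : ℕ ↦ ⋀[R]^i N)

theorem ι_tmul_ι_mul_ι_tmul_ι (x x' : M) (y y' : N) :
    (ι R x ᵍ⊗ₜ[R] ι R y * ι R x' ᵍ⊗ₜ[R] ι R y' : Λ(M)ᵍ⊗Λ(N)) =
      -((ι R x * ι R x') ᵍ⊗ₜ[R] (ι R y * ι R y')) := by
  refine tmul_mul_tmul_of_odd _ ?_ odd_one ?_ odd_one _ <;> exact ι_mem_exteriorPower_one _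

theorem commute_ι_tmul_ι (x x' : M) (y y' : N) :
    Commute (ι R x ᵍ⊗ₜ[R] ι R y : Λ(M)ᵍ⊗Λ(N)) (ι R x' ᵍ⊗ₜ[R] ι R y') := by
  rw [Commute, SemiconjBy, ι_tmul_ι_mul_ι_tmul_ι, ι_tmul_ι_mul_ι_tmul_ι, ι_mul_ι_comm x,
    ι_mul_ι_comm y, GradedTensorProduct.neg_tmul, GradedTensorProduct.tmul_neg, neg_neg]

theorem ι_tmul_ι_mul_self (x : M) (y : N) :
    (ι R x ᵍ⊗ₜ[R] ι R y * ι R x ᵍ⊗ₜ[R] ι R y : Λ(M)ᵍ⊗Λ(N)) = 0 := by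
  rw [ι_tmul_ι_mul_ι_tmul_ι, ι_sq_zero, GradedTensorProduct.zero_tmul, neg_zero]

theorem ι_tmul_ι_mul_four (x₁ x₂ x₃ x₄ : M) (y₁ y₂ y₃ y₄ : N) :
    (ι R x₁ ᵍ⊗ₜ[R] ι R y₁ * ι R x₂ ᵍ⊗ₜ[R] ι R y₂ * ι R x₃ ᵍ⊗ₜ[R] ι R y₃ *
      ι R x₄ ᵍ⊗ₜ[R] ι R y₄ : Λ(M)ᵍ⊗Λ(N)) =
      (ι R x₁ * ι R x₂ * ι R x₃ * ι R x₄) ᵍ⊗ₜ[R] (ι R y₁ * ι R y₂ * ι R y₃ * ι R y₄) := by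
  have hy : ι R y₁ * ι R y₂ ∈ ⋀[R]^2 N :=
    SetLike.mul_mem_graded (ι_mem_exteriorPower_one _) (ι_mem_exteriorPower_one _)
  have hx : ι R x₃ * ι R x₄ ∈ ⋀[R]^2 M :=
    SetLike.mul_mem_graded (ι_mem_exteriorPower_one _) (ι_mem_exteriorPower_one _)
  rw [mul_assoc _ (ι R x₃ ᵍ⊗ₜ[R] ι R y₃), ι_tmul_ι_mul_ι_tmul_ι, ι_tmul_ι_mul_ι_tmul_ι, neg_mul_neg,
    tmul_mul_tmul_of_even (𝒜 := fun i : ℕ ↦ ⋀[R]^i M) (ℬ := fun i : ℕ ↦ ⋀[R]^i N) _ hy even_two hx,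
    ← mul_assoc _ (ι R x₃), ← mul_assoc _ (ι R y₃)]

end ExteriorAlgebra

/-- In the Koszul-signed graded tensor product `Λ(M) ᵍ⊗ Λ(N)` of the exterior algebras of two
`R`-modules, the element `s = Σᵢ ι(xᵢ) ᵍ⊗ₜ ι(yᵢ)` satisfies
`s⁴ = 24 • Σ_{i<j<k<l} (ι(xᵢ)·ι(xⱼ)·ι(x_k)·ι(x_l)) ᵍ⊗ₜ (ι(yᵢ)·ι(yⱼ)·ι(y_k)·ι(y_l))`. -/
theorem fourth_power_of_sum_tmul_iota {R M N : Type*} [CommRing R]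
    [AddCommGroup M] [Module R M] [AddCommGroup N] [Module R N]
    (n : ℕ) (x : Fin n → M) (y : Fin n → N)
    (s : (fun i : ℕ ↦ ⋀[R]^i M) ᵍ⊗[R] (fun i : ℕ ↦ ⋀[R]^i N))
    (hs : s = ∑ i : Fin n, (ι R (x i)) ᵍ⊗ₜ[R] (ι R (y i))) :
    s ^ 4 = (24 : ℤ) •
      ∑ i : Fin n, ∑ j ∈ Finset.Ioi i, ∑ k ∈ Finset.Ioi j, ∑ l ∈ Finset.Ioi k,
        ((ι R (x i) * ι R (x j) * ι R (x k) * ι R (x l)) ᵍ⊗ₜ[R]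
          (ι R (y i) * ι R (y j) * ι R (y k) * ι R (y l))) := by
  rw [hs, sum_pow_eq_factorial_smul_orderedEsymm _ (fun _ _ ↦ commute_ι_tmul_ι _ _ _ _)
    (fun _ ↦ ι_tmul_ι_mul_self _ _)]
  simp only [orderedEsymm_succ_univ, orderedEsymm_succ_Ioi, orderedEsymm_zero, mul_one,
    Finset.mul_sum, ← mul_assoc, ι_tmul_ι_mul_four]
  rw [show (24 : ℤ) = (Nat.factorial 4 : ℤ) from rfl, natCast_zsmul]
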